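/- arXiv:2510.03883 — 4 statements merged into one kernel-verified Lean document; each statement's English description precedes it below -/
import Mathlib

section
/- Let γ, λ₁, …, λ₉ be real numbers and let f : ℝ² → ℝ be the polynomial f(x,y) = (1/3)(x − γy²)(x² + y⁴) + λ₁ + λ₂y + λ₃y² + λ₄y³ + λ₅y⁴ + λ₆x + λ₇xy + λ₈xy² + λ₉(x² + 3y⁴)y. Let G : ℝ² → ℝ² be the map G(x,y) = (ax + by + cy² + ξ, dy + η) with a > 0 and d > 0. If there exist real numbers γ', λ'₁, …, λ'₉ such that (f ∘ G)(x,y) = (1/3)(x − γ'y²)(x² + y⁴) + λ'₁ + λ'₂y + λ'₃y² + λ'₄y³ + λ'₅y⁴ + λ'₆x + λ'₇xy + λ'₈xy² + λ'₉(x² + 3y⁴)y for all (x,y) ∈ ℝ², then a = d = 1 and b = c = ξ = η = 0, i.e. G is the identity map (and consequently γ' = γ and λ'ᵢ = λᵢ for all i). -/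
/-- The canonical versal deformation of the real singularity class `J₁₀¹`:
`(1/3)(x − γy²)(x² + y⁴) + λ₁ + λ₂y + λ₃y² + λ₄y³ + λ₅y⁴ + λ₆x + λ₇xy + λ₈xy²
  + λ₉(x² + 3y⁴)y`. -/
noncomputable def vers1 (γ l1 l2 l3 l4 l5 l6 l7 l8 l9 x y : ℝ) : ℝ :=
  (1 / 3) * (x - γ * y ^ 2) * (x ^ 2 + y ^ 4) + l1 + l2 * y + l3 * y ^ 2 + l4 * y ^ 3 +
      l5 * y ^ 4 + l6 * x + l7 * x * y + l8 * x * y ^ 2 + l9 * (x ^ 2 + 3 * y ^ 4) * y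

/-!
Completing the cube in `x` writes `f = (x + s(y))³/3 + q(y) (x + s(y)) + r(y)` with `s`, `q`, `r`
polynomials in `y` of degrees `2`, `4`, `6`. As `G` is affine in `x` for fixed `y`, `f ∘ G` has
the canonical form only if `a = 1` and `s', q', r'` arise from `s, q, r` by substituting
`y ↦ dy + η` (with `by + cy² + ξ` added to `s`). The leading coefficients of these three identities
give `c ((γd² - c)² + 1) = 0`, hence `c = 0` and `d = 1`; the next ones give `η = 0` and `λ₉' = λ₉`,
and then `b = ξ = 0`. For `G = id` the remaining parameters are read off the coefficients of
`q` and `r`.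
-/

open Polynomial Finset

theorem Polynomial.coeff_comp_C_mul_X_add_C {R : Type*} [CommSemiring R] {p : R[X]} {n : ℕ}
    (hp : p.natDegree ≤ n) (d e : R) (k : ℕ) :
    (p.comp (C d * X + C e)).coeff k =
      d ^ k * ∑ j ∈ range (n + 1), (j.choose k : R) * e ^ (j - k) * p.coeff j := by
  have hcomp : p.comp (C d * X + C e) = (taylor e p).comp (C d * X) := by
    rw [taylor_apply, comp_assoc, add_comp, X_comp, C_comp]
  conv_lhs =>
    rw [hcomp, comp_C_mul_X_coeff, mul_comm, p.as_sum_range' (n + 1) (Nat.lt_succ_of_le hp)]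
  simp only [map_sum, taylor_monomial, finsetSum_coeff, coeff_C_mul, coeff_X_add_C_pow]
  congr 1
  exact sum_congr rfl fun j _ => by ring

theorem depressed_cubic_eq {a t p r t' p' r' : ℝ} (ha : 0 < a)
    (h : ∀ x, (a * x + t) ^ 3 / 3 + p * (a * x + t) + r = (x + t') ^ 3 / 3 + p' * (x + t') + r') :
    a = 1 ∧ t = t' ∧ p = p' ∧ r = r' := by
  have hP : C ((a ^ 3 - 1) / 3) * X ^ 3 + C (a ^ 2 * t - t') * X ^ 2
      + C (a * t ^ 2 + a * p - t' ^ 2 - p') * X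
      + C (t ^ 3 / 3 + p * t + r - t' ^ 3 / 3 - p' * t' - r') = 0 :=
    Polynomial.funext fun x => by
      simp only [eval_add, eval_mul, eval_C, eval_X, eval_pow, eval_zero]
      linear_combination h x
  have hcoeff (k : ℕ) := congrArg (coeff · k) hP
  have h3 := hcoeff 3; have h2 := hcoeff 2; have h1 := hcoeff 1; have h0 := hcoeff 0
  simp only [coeff_add, coeff_C_mul, coeff_X_pow, coeff_X, coeff_C, coeff_zero] at h3 h2 h1 h0
  norm_num at h3 h2 h1 h0
  obtain rfl : a = 1 := (pow_eq_one_iff_of_nonneg ha.le three_ne_zero).mp (by linarith)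
  obtain rfl : t = t' := by linarith
  obtain rfl : p = p' := by linarith
  exact ⟨rfl, rfl, rfl, by linarith⟩

namespace Vers1

/- With `f = x³/3 + A x² + B x + D`, completing the cube gives
`f = (x + A)³/3 + (B - A²) (x + A) + (D - A B + 2A³/3)`; `shift`, `linCoeff`, `constCoeff` are
these three polynomials in `y`, expanded. -/

noncomputable def shift (γ l9 : ℝ) : ℝ[X] := C l9 * X - C (γ / 3) * X ^ 2

noncomputable def linCoeff (γ l6 l7 l8 l9 : ℝ) : ℝ[X] :=
  C (1 / 3 - γ ^ 2 / 9) * X ^ 4 + C (2 * γ * l9 / 3) * X ^ 3 + C (l8 - l9 ^ 2) * X ^ 2 +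
    C l7 * X + C l6

noncomputable def constCoeff (γ l1 l2 l3 l4 l5 l6 l7 l8 l9 : ℝ) : ℝ[X] :=
  C (-(2 * γ / 9) - 2 * γ ^ 3 / 81) * X ^ 6 + C ((8 / 3 + 2 * γ ^ 2 / 9) * l9) * X ^ 5 +
    C (l5 + γ * l8 / 3 - 2 * γ * l9 ^ 2 / 3) * X ^ 4 +
    C (l4 - l8 * l9 + γ * l7 / 3 + 2 * l9 ^ 3 / 3) * X ^ 3 +
    C (l3 - l7 * l9 + γ * l6 / 3) * X ^ 2 + C (l2 - l6 * l9) * X + C l1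

theorem vers1_eq_depressed (γ l1 l2 l3 l4 l5 l6 l7 l8 l9 x y : ℝ) :
    vers1 γ l1 l2 l3 l4 l5 l6 l7 l8 l9 x y =
      (x + (shift γ l9).eval y) ^ 3 / 3
        + (linCoeff γ l6 l7 l8 l9).eval y * (x + (shift γ l9).eval y)
        + (constCoeff γ l1 l2 l3 l4 l5 l6 l7 l8 l9).eval y := by
  simp only [vers1, shift, linCoeff, constCoeff, eval_add, eval_sub, eval_mul, eval_C, eval_X,
    eval_pow]
  ring

theorem natDegree_shift_le (γ l9 : ℝ) : (shift γ l9).natDegree ≤ 2 := by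
  unfold shift; compute_degree

theorem natDegree_linCoeff_le (γ l6 l7 l8 l9 : ℝ) : (linCoeff γ l6 l7 l8 l9).natDegree ≤ 4 := by
  unfold linCoeff; compute_degree

theorem natDegree_constCoeff_le (γ l1 l2 l3 l4 l5 l6 l7 l8 l9 : ℝ) :
    (constCoeff γ l1 l2 l3 l4 l5 l6 l7 l8 l9).natDegree ≤ 6 := by
  unfold constCoeff; compute_degree

theorem depressed_comp_eq_of_vers1_comp_eq {γ l1 l2 l3 l4 l5 l6 l7 l8 l9 : ℝ}
    {γ' l1' l2' l3' l4' l5' l6' l7' l8' l9' : ℝ} {a b c d ξ η : ℝ} (ha : 0 < a)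
    (h : ∀ x y : ℝ,
      vers1 γ l1 l2 l3 l4 l5 l6 l7 l8 l9 (a * x + b * y + c * y ^ 2 + ξ) (d * y + η)
        = vers1 γ' l1' l2' l3' l4' l5' l6' l7' l8' l9' x y) :
    a = 1 ∧
      C c * X ^ 2 + C b * X + C ξ + (shift γ l9).comp (C d * X + C η) = shift γ' l9' ∧
      (linCoeff γ l6 l7 l8 l9).comp (C d * X + C η) = linCoeff γ' l6' l7' l8' l9' ∧
      (constCoeff γ l1 l2 l3 l4 l5 l6 l7 l8 l9).comp (C d * X + C η) =
        constCoeff γ' l1' l2' l3' l4' l5' l6' l7' l8' l9' := by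
  have key (y : ℝ) := depressed_cubic_eq ha
      (t := (C c * X ^ 2 + C b * X + C ξ + (shift γ l9).comp (C d * X + C η)).eval y)
      (p := ((linCoeff γ l6 l7 l8 l9).comp (C d * X + C η)).eval y)
      (r := ((constCoeff γ l1 l2 l3 l4 l5 l6 l7 l8 l9).comp (C d * X + C η)).eval y)
      (t' := (shift γ' l9').eval y) (p' := (linCoeff γ' l6' l7' l8' l9').eval y)
      (r' := (constCoeff γ' l1' l2' l3' l4' l5' l6' l7' l8' l9').eval y) fun x => by
    have hxy := h x y
    rw [vers1_eq_depressed, vers1_eq_depressed] at hxy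
    simp only [eval_add, eval_mul, eval_C, eval_X, eval_pow, eval_comp]
    linear_combination hxy
  exact ⟨(key 0).1, Polynomial.funext fun y => (key y).2.1,
    Polynomial.funext fun y => (key y).2.2.1, Polynomial.funext fun y => (key y).2.2.2⟩

theorem eq_of_leading_coeffs_eq {γ γ' c d : ℝ} (hd : 0 < d)
    (h2 : c + -(d ^ 2 * (γ / 3)) = -(γ' / 3))
    (h4 : d ^ 4 * (1 / 3 - γ ^ 2 / 9) = 1 / 3 - γ' ^ 2 / 9)
    (h6 : d ^ 6 * (-(2 * γ / 9) - 2 * γ ^ 3 / 81) = -(2 * γ' / 9) - 2 * γ' ^ 3 / 81) :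
    c = 0 ∧ d = 1 ∧ γ' = γ := by
  obtain rfl : γ' = γ * d ^ 2 - 3 * c := by linear_combination 3 * h2
  have hc : c * ((γ * d ^ 2 - c) ^ 2 + 1) = 0 := by
    linear_combination (-3 / 2) * h6 - γ * d ^ 2 * h4
  obtain rfl : c = 0 := (mul_eq_zero.mp hc).resolve_right (by positivity)
  obtain rfl : d = 1 :=
    (pow_eq_one_iff_of_nonneg hd.le four_ne_zero).mp (by linear_combination 3 * h4)
  exact ⟨rfl, rfl, by ring⟩

theorem eq_of_subleading_coeffs_eq {γ η l9 l9' : ℝ}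
    (h3 : 2 * γ * l9 / 3 + 4 * η * (1 / 3 - γ ^ 2 / 9) = 2 * γ * l9' / 3)
    (h5 : (8 / 3 + 2 * γ ^ 2 / 9) * l9 + 6 * η * (-(2 * γ / 9) - 2 * γ ^ 3 / 81) =
      (8 / 3 + 2 * γ ^ 2 / 9) * l9') :
    η = 0 ∧ l9' = l9 := by
  obtain rfl : η = 0 := by
    linear_combination (9 / 32) * (8 / 3 + 2 * γ ^ 2 / 9) * h3 - (9 / 32) * (2 * γ / 3) * h5
  have h9 : (8 / 3 + 2 * γ ^ 2 / 9) * (l9' - l9) = 0 := by linear_combination -h5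
  exact ⟨rfl, by linarith [(mul_eq_zero.mp h9).resolve_left (by positivity)]⟩

theorem eq_id_of_depressed_comp_eq {γ l1 l2 l3 l4 l5 l6 l7 l8 l9 : ℝ}
    {γ' l1' l2' l3' l4' l5' l6' l7' l8' l9' : ℝ} {b c d ξ η : ℝ} (hd : 0 < d)
    (hs : C c * X ^ 2 + C b * X + C ξ + (shift γ l9).comp (C d * X + C η) = shift γ' l9')
    (hq : (linCoeff γ l6 l7 l8 l9).comp (C d * X + C η) = linCoeff γ' l6' l7' l8' l9')
    (hr : (constCoeff γ l1 l2 l3 l4 l5 l6 l7 l8 l9).comp (C d * X + C η) =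
        constCoeff γ' l1' l2' l3' l4' l5' l6' l7' l8' l9') :
    d = 1 ∧ b = 0 ∧ c = 0 ∧ ξ = 0 ∧ η = 0 ∧ γ' = γ ∧ l9' = l9 := by
  have e2 := congrArg (coeff · 2) hs
  have e1 := congrArg (coeff · 1) hs
  have e0 := congrArg (coeff · 0) hs
  have e4 := congrArg (coeff · 4) hq
  have e3 := congrArg (coeff · 3) hq
  have e6 := congrArg (coeff · 6) hr
  have e5 := congrArg (coeff · 5) hr
  simp only [coeff_add, coeff_comp_C_mul_X_add_C (natDegree_shift_le ..),
    coeff_comp_C_mul_X_add_C (natDegree_linCoeff_le ..),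
    coeff_comp_C_mul_X_add_C (natDegree_constCoeff_le ..)] at e2 e1 e0 e4 e3 e6 e5
  simp only [sum_range_succ, sum_range_zero, shift, linCoeff, constCoeff, coeff_add, coeff_sub,
    coeff_C_mul, coeff_X_pow, coeff_X, coeff_C] at e2 e1 e0 e4 e3 e6 e5
  norm_num [Nat.choose] at e2 e1 e0 e4 e3 e6 e5
  obtain ⟨rfl, rfl, rfl⟩ := eq_of_leading_coeffs_eq hd e2 e4 e6
  norm_num at e3 e5
  obtain ⟨rfl, rfl⟩ := eq_of_subleading_coeffs_eq e3 e5
  exact ⟨rfl, by linarith, rfl, by linarith, rfl, rfl, rfl⟩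

theorem eq_of_linCoeff_eq_of_constCoeff_eq {γ l1 l2 l3 l4 l5 l6 l7 l8 l9 : ℝ}
    {l1' l2' l3' l4' l5' l6' l7' l8' : ℝ}
    (hq : linCoeff γ l6 l7 l8 l9 = linCoeff γ l6' l7' l8' l9)
    (hr : constCoeff γ l1 l2 l3 l4 l5 l6 l7 l8 l9 =
      constCoeff γ l1' l2' l3' l4' l5' l6' l7' l8' l9) :
    l1' = l1 ∧ l2' = l2 ∧ l3' = l3 ∧ l4' = l4 ∧ l5' = l5 ∧ l6' = l6 ∧ l7' = l7 ∧ l8' = l8 := by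
  have hqk (k : ℕ) := congrArg (coeff · k) hq
  have hrk (k : ℕ) := congrArg (coeff · k) hr
  simp only [linCoeff, constCoeff, coeff_add, coeff_C_mul, coeff_X_pow, coeff_X, coeff_C] at hqk hrk
  obtain rfl : l6' = l6 := by simpa using (hqk 0).symm
  obtain rfl : l7' = l7 := by simpa using (hqk 1).symm
  obtain rfl : l8' = l8 := by simpa using (hqk 2).symm
  have h0 := hrk 0; have h1 := hrk 1; have h2 := hrk 2; have h3 := hrk 3; have h4 := hrk 4
  norm_num at h0 h1 h2 h3 h4
  exact ⟨h0.symm, h1.symm, h2.symm, h3.symm, h4.symm, rfl, rfl, rfl⟩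

end Vers1

/-- If a coordinate change `G(x,y) = (ax + by + cy² + ξ, dy + η)` with `a > 0`, `d > 0`
maps one member of the canonical versal deformation of `J₁₀¹` to another (i.e. `f ∘ G`
again has the canonical form), then `G` is the identity map, and the parameters
coincide. -/
theorem vers1_orbit_unique
    (γ l1 l2 l3 l4 l5 l6 l7 l8 l9 : ℝ)
    (γ' l1' l2' l3' l4' l5' l6' l7' l8' l9' : ℝ)
    (a b c d ξ η : ℝ) (ha : 0 < a) (hd : 0 < d)
    (h : ∀ x y : ℝ,
      vers1 γ l1 l2 l3 l4 l5 l6 l7 l8 l9 (a * x + b * y + c * y ^ 2 + ξ) (d * y + η)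
        = vers1 γ' l1' l2' l3' l4' l5' l6' l7' l8' l9' x y) :
    a = 1 ∧ d = 1 ∧ b = 0 ∧ c = 0 ∧ ξ = 0 ∧ η = 0 ∧
      (∀ x y : ℝ, (a * x + b * y + c * y ^ 2 + ξ, d * y + η) = (x, y)) ∧
      γ' = γ ∧ l1' = l1 ∧ l2' = l2 ∧ l3' = l3 ∧ l4' = l4 ∧ l5' = l5 ∧
      l6' = l6 ∧ l7' = l7 ∧ l8' = l8 ∧ l9' = l9 := by
  obtain ⟨rfl, hs, hq, hr⟩ := Vers1.depressed_comp_eq_of_vers1_comp_eq ha h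
  obtain ⟨rfl, rfl, rfl, rfl, rfl, rfl, rfl⟩ := Vers1.eq_id_of_depressed_comp_eq hd hs hq hr
  simp only [map_one, one_mul, map_zero, add_zero, comp_X] at hq hr
  obtain ⟨h1, h2, h3, h4, h5, h6, h7, h8⟩ := Vers1.eq_of_linCoeff_eq_of_constCoeff_eq hq hr
  exact ⟨rfl, rfl, rfl, rfl, rfl, rfl, fun x y => by simp, rfl, h1, h2, h3, h4, h5, h6, h7, h8, rfl⟩
end

section
/- Let b, α ∈ ℝ, let σ ∈ {1, −1}, and let f(x,y) = x³ + b·x²y² + σ·xy⁴ + α·x²y. If (x₀, y₀) ∈ ℝ² is a critical point of f with (x₀, y₀) ≠ (0, 0), then x₀ ≠ 0, y₀ ≠ 0, and the y-coordinate satisfies 48σ·y₀² = 12b²·y₀² + 20bα·y₀ + 7α². -/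
/-- A point `p = (x₀, y₀)` is a critical point of `f : ℝ → ℝ → ℝ` if both
partial derivatives of `f` vanish at `p`. -/
def IsCriticalPt (f : ℝ → ℝ → ℝ) (p : ℝ × ℝ) : Prop :=
  deriv (fun t => f t p.2) p.1 = 0 ∧ deriv (fun t => f p.1 t) p.2 = 0

/-- The Hessian determinant `f_xx(p) * f_yy(p) - f_xy(p)^2` of `f` at `p`. -/
noncomputable def hessDet (f : ℝ → ℝ → ℝ) (p : ℝ × ℝ) : ℝ :=
  deriv (fun x => deriv (fun t => f t p.2) x) p.1 *
      deriv (fun y => deriv (fun t => f p.1 t) y) p.2 -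
    (deriv (fun y => deriv (fun t => f t y) p.1) p.2) ^ 2

/-- `p` is a local minimum point of the function `(x, y) ↦ f x y`. -/
def IsLocMin (f : ℝ → ℝ → ℝ) (p : ℝ × ℝ) : Prop :=
  IsLocalMin (fun q : ℝ × ℝ => f q.1 q.2) p

/-- `p` is a local maximum point of the function `(x, y) ↦ f x y`. -/
def IsLocMax (f : ℝ → ℝ → ℝ) (p : ℝ × ℝ) : Prop :=
  IsLocalMax (fun q : ℝ × ℝ => f q.1 q.2) p

/-- A saddle is a critical point that is neither a local minimum
nor a local maximum. -/
def IsSaddle (f : ℝ → ℝ → ℝ) (p : ℝ × ℝ) : Prop :=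
  IsCriticalPt f p ∧ ¬ IsLocMin f p ∧ ¬ IsLocMax f p

/-- For the normal form `x³ + bx²y² + σxy⁴ + αx²y` (σ = ±1) of a `Φ₃`-function with a
`D₈⁻` critical point at the origin, any critical point other than the origin has both
coordinates nonzero and its `y`-coordinate satisfies
`48σy² = 12b²y² + 20bαy + 7α²`. -/
theorem D8_critical_point_constraint (b α σ x₀ y₀ : ℝ) (hσ : σ = 1 ∨ σ = -1)
    (hcrit : IsCriticalPt
      (fun x y => x ^ 3 + b * x ^ 2 * y ^ 2 + σ * x * y ^ 4 + α * x ^ 2 * y) (x₀, y₀))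
    (hne : (x₀, y₀) ≠ (0, 0)) :
    x₀ ≠ 0 ∧ y₀ ≠ 0 ∧
      48 * σ * y₀ ^ 2 = 12 * b ^ 2 * y₀ ^ 2 + 20 * b * α * y₀ + 7 * α ^ 2 := by
  obtain ⟨h1, h2⟩ := hcrit
  have hs2 : σ * σ = 1 := by rcases hσ with h | h <;> rw [h] <;> norm_num
  have hσ0 : σ ≠ 0 := by rcases hσ with h | h <;> rw [h] <;> norm_num
  have e1 : 3*x₀^2 + b*(2*x₀)*y₀^2 + σ*y₀^4 + α*(2*x₀)*y₀ = 0 := by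
    have hd : HasDerivAt (fun t : ℝ => t ^ 3 + b * t ^ 2 * y₀ ^ 2 + σ * t * y₀ ^ 4 + α * t ^ 2 * y₀)
        (3*x₀^2 + b*(2*x₀)*y₀^2 + σ*y₀^4 + α*(2*x₀)*y₀) x₀ := by
      have h3 : HasDerivAt (fun t : ℝ => t ^ 3) (3*x₀^2) x₀ := by
        simpa using hasDerivAt_pow 3 x₀
      have hb : HasDerivAt (fun t : ℝ => b * t ^ 2 * y₀ ^ 2) (b*(2*x₀)*y₀^2) x₀ := by
        simpa using (((hasDerivAt_pow 2 x₀).const_mul b).mul_const (y₀^2))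
      have hs : HasDerivAt (fun t : ℝ => σ * t * y₀ ^ 4) (σ*y₀^4) x₀ := by
        simpa using (((hasDerivAt_id x₀).const_mul σ).mul_const (y₀^4))
      have ha : HasDerivAt (fun t : ℝ => α * t ^ 2 * y₀) (α*(2*x₀)*y₀) x₀ := by
        simpa using (((hasDerivAt_pow 2 x₀).const_mul α).mul_const y₀)
      exact ((h3.add hb).add hs).add ha
    rwa [hd.deriv] at h1
  have e2 : b*x₀^2*(2*y₀) + σ*x₀*(4*y₀^3) + α*x₀^2 = 0 := by
    have hd : HasDerivAt (fun t : ℝ => x₀ ^ 3 + b * x₀ ^ 2 * t ^ 2 + σ * x₀ * t ^ 4 + α * x₀ ^ 2 * t)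
        (b*x₀^2*(2*y₀) + σ*x₀*(4*y₀^3) + α*x₀^2) y₀ := by
      have h3 : HasDerivAt (fun _ : ℝ => x₀ ^ 3) (0:ℝ) y₀ := hasDerivAt_const _ _
      have hb : HasDerivAt (fun t : ℝ => b * x₀ ^ 2 * t ^ 2) (b*x₀^2*(2*y₀)) y₀ := by
        simpa using ((hasDerivAt_pow 2 y₀).const_mul (b*x₀^2))
      have hs : HasDerivAt (fun t : ℝ => σ * x₀ * t ^ 4) (σ*x₀*(4*y₀^3)) y₀ := by
        simpa using ((hasDerivAt_pow 4 y₀).const_mul (σ*x₀))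
      have ha : HasDerivAt (fun t : ℝ => α * x₀ ^ 2 * t) (α*x₀^2) y₀ := by
        simpa using ((hasDerivAt_id y₀).const_mul (α*x₀^2))
      have := ((h3.add hb).add hs).add ha
      exact this.congr_deriv (by ring)
    rwa [hd.deriv] at h2
  have hx : x₀ ≠ 0 := by
    rintro rfl
    have hy : y₀ = 0 := by
      have : σ * y₀ ^ 4 = 0 := by linarith [e1]
      have := (mul_eq_zero.mp this).resolve_left hσ0
      exact pow_eq_zero_iff (by norm_num) |>.mp this
    exact hne (by simp [hy])
  have hy : y₀ ≠ 0 := by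
    rintro rfl
    have : x₀ = 0 := by nlinarith [e1]
    exact hx this
  refine ⟨hx, hy, ?_⟩
  -- from e2: x₀*(2*b*y₀ + α) = -4*σ*y₀^3
  have h : x₀ * (2*b*x₀*y₀ + 4*σ*y₀^3 + α*x₀) = 0 := by linear_combination e2
  have h'' : 2*b*x₀*y₀ + 4*σ*y₀^3 + α*x₀ = 0 := (mul_eq_zero.mp h).resolve_left hx
  have h' : x₀ * (2*b*y₀+α) = -4*σ*y₀^3 := by linear_combination h''
  have hx2 : x₀^2*(2*b*y₀+α)^2 = 16*y₀^6 := by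
    linear_combination (x₀*(2*b*y₀+α) - 4*σ*y₀^3) * h' + 16*y₀^6*hs2
  have key : y₀^4 * (48*σ*y₀^2 - (12*b^2*y₀^2+20*b*α*y₀+7*α^2)) = 0 := by
    linear_combination (σ*(2*b*y₀+α)^2) * e1 - 3*σ*hx2
      - (2*σ*y₀*(b*y₀+α)*(2*b*y₀+α))*h'
      + (-8*y₀^4*(b*y₀+α)*(2*b*y₀+α) + y₀^4*(2*b*y₀+α)^2)*hs2 + (24*b^2*y₀^6+40*b*α*y₀^5+14*α^2*y₀^4)*hs2
  have := (mul_eq_zero.mp key).resolve_left (pow_ne_zero 4 hy)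
  linarith
end

section
/- For every real number ε with 0 < ε < 1, the polynomial function f : ℝ² → ℝ given by f(x,y) = x·((y² − 1)² + x² − ε) has only nondegenerate critical points, and it has exactly eight critical points, of which exactly two are local minima, exactly four are saddles, and exactly two are local maxima. -/
set_option maxHeartbeats 1000000

/-- Realizing family for `J₁₀¹` with eight critical points and two maxima. -/
noncomputable def f11 (ε : ℝ) : ℝ → ℝ → ℝ := fun x y => x * ((y ^ 2 - 1) ^ 2 + x ^ 2 - ε)

namespace MorseF11

lemma hdx (ε y x : ℝ) : HasDerivAt (fun t => f11 ε t y) ((y^2-1)^2 + 3*x^2 - ε) x := by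
  have h : HasDerivAt (fun t : ℝ => t * ((y^2-1)^2 + t^2 - ε))
      (1 * ((y^2-1)^2 + x^2 - ε) + x * ((2:ℕ) * x ^ 1)) x :=
    (hasDerivAt_id x).mul (((hasDerivAt_pow 2 x).const_add ((y^2-1)^2)).sub_const ε)
  exact h.congr_deriv (by push_cast; ring)

lemma hdy (ε x y : ℝ) : HasDerivAt (fun t => f11 ε x t) (x * (4*y^3 - 4*y)) y := by
  have h := ((((hasDerivAt_pow 2 y).sub_const 1).pow 2).add_const (x^2)).sub_const ε |>.const_mul x
  exact h.congr_deriv (by push_cast; ring)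

lemma deriv_x (ε y : ℝ) : (fun s => deriv (fun t => f11 ε t y) s) = fun s => (y^2-1)^2 + 3*s^2 - ε :=
  funext fun s => (hdx ε y s).deriv

lemma deriv_y (ε x : ℝ) : (fun s => deriv (fun t => f11 ε x t) s) = fun s => x * (4*s^3 - 4*s) :=
  funext fun s => (hdy ε x s).deriv

lemma d2xx (ε y x : ℝ) : deriv (fun s => deriv (fun t => f11 ε t y) s) x = 6*x := by
  rw [deriv_x]
  have h := (((hasDerivAt_pow 2 x).const_mul 3).const_add ((y^2-1)^2)).sub_const ε
  rw [show (fun s : ℝ => (y^2-1)^2 + 3*s^2 - ε) = fun s => (y^2-1)^2 + 3*(s^2) - ε from rfl,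
    h.deriv]
  push_cast; ring

lemma d2yy (ε x y : ℝ) : deriv (fun s => deriv (fun t => f11 ε x t) s) y = x*(12*y^2-4) := by
  rw [deriv_y]
  have h := (((hasDerivAt_pow 3 y).const_mul 4).sub ((hasDerivAt_id y).const_mul 4)).const_mul x
  simp only [id] at h
  refine h.deriv.trans ?_
  push_cast; ring

lemma d2xy (ε x y : ℝ) : deriv (fun s => deriv (fun t => f11 ε t s) x) y = 4*y^3-4*y := by
  have e : (fun s => deriv (fun t => f11 ε t s) x) = fun s => (s^2-1)^2 + 3*x^2 - ε :=
    funext fun s => (hdx ε s x).deriv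
  rw [e]
  have h := ((((hasDerivAt_pow 2 y).sub_const 1).pow 2).add_const (3*x^2)).sub_const ε
  refine h.deriv.trans ?_; push_cast; ring

lemma crit_iff (ε : ℝ) (p : ℝ × ℝ) :
    IsCriticalPt (f11 ε) p ↔ ((p.2^2-1)^2 + 3*p.1^2 - ε = 0 ∧ p.1 * (4*p.2^3 - 4*p.2) = 0) := by
  rw [IsCriticalPt, (hdx ε p.2 p.1).deriv, (hdy ε p.1 p.2).deriv]

lemma hess_eq (ε : ℝ) (p : ℝ × ℝ) :
    hessDet (f11 ε) p = 6*p.1*(p.1*(12*p.2^2-4)) - (4*p.2^3-4*p.2)^2 := by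
  rw [hessDet, d2xx, d2yy, d2xy]

lemma not_max_of_wit (f : ℝ × ℝ → ℝ) (p : ℝ × ℝ)
    (h : ∀ δ : ℝ, 0 < δ → ∃ q, dist q p < δ ∧ f p < f q) : ¬ IsLocalMax f p := by
  intro hm
  rcases Metric.eventually_nhds_iff.1 hm with ⟨δ, hδ, hball⟩
  rcases h δ hδ with ⟨q, hq1, hq2⟩
  exact absurd (hball hq1) (not_le.2 hq2)

lemma not_min_of_wit (f : ℝ × ℝ → ℝ) (p : ℝ × ℝ)
    (h : ∀ δ : ℝ, 0 < δ → ∃ q, dist q p < δ ∧ f q < f p) : ¬ IsLocalMin f p := by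
  intro hm
  rcases Metric.eventually_nhds_iff.1 hm with ⟨δ, hδ, hball⟩
  rcases h δ hδ with ⟨q, hq1, hq2⟩
  exact absurd (hball hq1) (not_le.2 hq2)

lemma dist_fst (x x' y : ℝ) : dist ((x', y) : ℝ × ℝ) (x, y) = |x' - x| := by
  rw [Prod.dist_eq]
  simp [Real.dist_eq]

lemma locmin (ε a y₀ : ℝ) (ha : 0 < a) (haε : 3 * a^2 = ε) (hy : y₀^2 = 1) :
    IsLocMin (f11 ε) (a, y₀) := by
  have hev : ∀ᶠ q : ℝ × ℝ in nhds (a, y₀), 0 < q.1 :=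
    (isOpen_lt continuous_const continuous_fst).eventually_mem (by simpa using ha)
  filter_upwards [hev] with q hq
  simp only [f11]
  rw [hy, ← haε]
  nlinarith [mul_nonneg hq.le (sq_nonneg (q.2^2 - 1)),
    mul_nonneg (sq_nonneg (q.1 - a)) (by nlinarith : (0:ℝ) ≤ q.1 + 2*a)]

lemma locmax (ε a y₀ : ℝ) (ha : 0 < a) (haε : 3 * a^2 = ε) (hy : y₀^2 = 1) :
    IsLocMax (f11 ε) (-a, y₀) := by
  have hev : ∀ᶠ q : ℝ × ℝ in nhds (-a, y₀), q.1 < 0 :=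
    (isOpen_lt continuous_fst continuous_const).eventually_mem (by simpa using ha)
  filter_upwards [hev] with q hq
  simp only [f11]
  rw [hy, ← haε]
  nlinarith [mul_nonpos_of_nonpos_of_nonneg hq.le (sq_nonneg (q.2^2 - 1)),
    mul_nonpos_of_nonneg_of_nonpos (sq_nonneg (q.1 + a)) (by nlinarith : q.1 - 2*a ≤ 0)]

lemma notmax_a (ε a y₀ : ℝ) (ha : 0 < a) (haε : 3 * a^2 = ε) (hy : y₀^2 = 1) :
    ¬ IsLocMax (f11 ε) (a, y₀) := by
  apply not_max_of_wit
  intro δ hδ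
  refine ⟨(a + δ/2, y₀), ?_, ?_⟩
  · rw [dist_fst]; rw [abs_of_pos (by linarith)]; linarith
  · simp only [f11]; rw [hy, ← haε]
    nlinarith [mul_pos (mul_pos hδ hδ) (by linarith : (0:ℝ) < 3*a + δ/2)]

lemma notmin_ma (ε a y₀ : ℝ) (ha : 0 < a) (haε : 3 * a^2 = ε) (hy : y₀^2 = 1) :
    ¬ IsLocMin (f11 ε) (-a, y₀) := by
  apply not_min_of_wit
  intro δ hδ
  refine ⟨(-a - δ/2, y₀), ?_, ?_⟩
  · rw [dist_fst]; rw [show -a - δ/2 - -a = -(δ/2) by ring, abs_neg, abs_of_pos (by linarith)]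
    linarith
  · simp only [f11]; rw [hy, ← haε]
    nlinarith [mul_pos (mul_pos hδ hδ) (by linarith : (0:ℝ) < 3*a + δ/2)]

lemma notmin_0 (ε y₀ : ℝ) (hy : (y₀^2 - 1)^2 = ε) : ¬ IsLocMin (f11 ε) (0, y₀) := by
  apply not_min_of_wit
  intro δ hδ
  refine ⟨(-(δ/2), y₀), ?_, ?_⟩
  · rw [dist_fst]; rw [show -(δ/2) - 0 = -(δ/2) by ring, abs_neg, abs_of_pos (by linarith)]
    linarith
  · simp only [f11]; rw [← hy]
    nlinarith [mul_pos (mul_pos hδ hδ) hδ]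

lemma notmax_0 (ε y₀ : ℝ) (hy : (y₀^2 - 1)^2 = ε) : ¬ IsLocMax (f11 ε) (0, y₀) := by
  apply not_max_of_wit
  intro δ hδ
  refine ⟨(δ/2, y₀), ?_, ?_⟩
  · rw [dist_fst]; rw [show δ/2 - 0 = δ/2 by ring, abs_of_pos (by linarith)]; linarith
  · simp only [f11]; rw [← hy]
    nlinarith [mul_pos (mul_pos hδ hδ) hδ]

lemma crit_set (ε : ℝ) (hε0 : 0 < ε) (hε1 : ε < 1) :
    {p : ℝ × ℝ | IsCriticalPt (f11 ε) p} =
      {(Real.sqrt (ε/3), 1), (Real.sqrt (ε/3), -1), (-Real.sqrt (ε/3), 1), (-Real.sqrt (ε/3), -1),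
       (0, Real.sqrt (1 + Real.sqrt ε)), (0, -Real.sqrt (1 + Real.sqrt ε)),
       (0, Real.sqrt (1 - Real.sqrt ε)), (0, -Real.sqrt (1 - Real.sqrt ε))} := by
  have hsε : 0 < Real.sqrt ε := Real.sqrt_pos.2 hε0
  have hsε1 : Real.sqrt ε < 1 := by
    rw [show (1:ℝ) = Real.sqrt 1 by simp]
    exact Real.sqrt_lt_sqrt hε0.le hε1
  have hsq : Real.sqrt ε ^ 2 = ε := Real.sq_sqrt hε0.le
  set a := Real.sqrt (ε/3) with ha_def
  set b := Real.sqrt (1 + Real.sqrt ε) with hb_def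
  set c := Real.sqrt (1 - Real.sqrt ε) with hc_def
  have ha2 : a^2 = ε/3 := Real.sq_sqrt (by linarith)
  have hb2 : b^2 = 1 + Real.sqrt ε := Real.sq_sqrt (by linarith)
  have hc2 : c^2 = 1 - Real.sqrt ε := Real.sq_sqrt (by linarith)
  ext ⟨x, y⟩
  simp only [Set.mem_setOf_eq, crit_iff, Set.mem_insert_iff, Set.mem_singleton_iff,
    Prod.mk.injEq]
  constructor
  · rintro ⟨h1, h2⟩
    rcases mul_eq_zero.1 h2 with hx | hy
    · subst hx
      have hfac : (y^2 - 1 - Real.sqrt ε) * (y^2 - 1 + Real.sqrt ε) = 0 := by nlinarith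
      rcases mul_eq_zero.1 hfac with h | h
      · have : (y - b) * (y + b) = 0 := by nlinarith
        rcases mul_eq_zero.1 this with h' | h'
        · exact Or.inr (Or.inr (Or.inr (Or.inr (Or.inl ⟨rfl, by linarith⟩))))
        · exact Or.inr (Or.inr (Or.inr (Or.inr (Or.inr (Or.inl ⟨rfl, by linarith⟩)))))
      · have : (y - c) * (y + c) = 0 := by nlinarith
        rcases mul_eq_zero.1 this with h' | h'
        · exact Or.inr (Or.inr (Or.inr (Or.inr (Or.inr (Or.inr (Or.inl ⟨rfl, by linarith⟩))))))
        · exact Or.inr (Or.inr (Or.inr (Or.inr (Or.inr (Or.inr (Or.inr ⟨rfl, by linarith⟩))))))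
    · have hy' : y * (y - 1) * (y + 1) = 0 := by nlinarith
      rcases mul_eq_zero.1 hy' with h | h
      · rcases mul_eq_zero.1 h with h0 | h1
        · exfalso; rw [h0] at h1; nlinarith
        · have hy1 : y = 1 := by linarith
          subst hy1
          have : (x - a) * (x + a) = 0 := by nlinarith
          rcases mul_eq_zero.1 this with h' | h'
          · exact Or.inl ⟨by linarith, rfl⟩
          · exact Or.inr (Or.inr (Or.inl ⟨by linarith, rfl⟩))
      · have hy1 : y = -1 := by linarith
        subst hy1
        have : (x - a) * (x + a) = 0 := by nlinarith
        rcases mul_eq_zero.1 this with h' | h'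
        · exact Or.inr (Or.inl ⟨by linarith, rfl⟩)
        · exact Or.inr (Or.inr (Or.inr (Or.inl ⟨by linarith, rfl⟩)))
  · rintro (⟨hx, hy⟩ | ⟨hx, hy⟩ | ⟨hx, hy⟩ | ⟨hx, hy⟩ | ⟨hx, hy⟩ | ⟨hx, hy⟩ | ⟨hx, hy⟩ | ⟨hx, hy⟩) <;>
      subst hx <;> subst hy <;> constructor <;> nlinarith

end MorseF11

open MorseF11 in
/-- For every `0 < ε < 1`, the polynomial `x((y²−1)² + x² − ε)` has only nondegenerate
critical points: exactly eight of them, of which exactly two are local minima, exactly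
four are saddles, and exactly two are local maxima. -/
theorem morse_data_f11 (ε : ℝ) (hε0 : 0 < ε) (hε1 : ε < 1) :
    (∀ p : ℝ × ℝ, IsCriticalPt (f11 ε) p → hessDet (f11 ε) p ≠ 0) ∧
    {p : ℝ × ℝ | IsCriticalPt (f11 ε) p}.Finite ∧
    {p : ℝ × ℝ | IsCriticalPt (f11 ε) p}.ncard = 8 ∧
    {p : ℝ × ℝ | IsCriticalPt (f11 ε) p ∧ IsLocMin (f11 ε) p}.ncard = 2 ∧
    {p : ℝ × ℝ | IsSaddle (f11 ε) p}.ncard = 4 ∧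
    {p : ℝ × ℝ | IsCriticalPt (f11 ε) p ∧ IsLocMax (f11 ε) p}.ncard = 2 := by
  have hsε : 0 < Real.sqrt ε := Real.sqrt_pos.2 hε0
  have hsε1 : Real.sqrt ε < 1 := by
    rw [show (1:ℝ) = Real.sqrt 1 by simp]
    exact Real.sqrt_lt_sqrt hε0.le hε1
  have hsq : Real.sqrt ε ^ 2 = ε := Real.sq_sqrt hε0.le
  set a := Real.sqrt (ε/3) with ha_def
  set b := Real.sqrt (1 + Real.sqrt ε) with hb_def
  set c := Real.sqrt (1 - Real.sqrt ε) with hc_def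
  have ha2 : a^2 = ε/3 := Real.sq_sqrt (by linarith)
  have hb2 : b^2 = 1 + Real.sqrt ε := Real.sq_sqrt (by linarith)
  have hc2 : c^2 = 1 - Real.sqrt ε := Real.sq_sqrt (by linarith)
  have ha : 0 < a := Real.sqrt_pos.2 (by linarith)
  have hb : 0 < b := Real.sqrt_pos.2 (by linarith)
  have hc : 0 < c := Real.sqrt_pos.2 (by linarith)
  have hcb : c < b := by nlinarith
  have haε : 3 * a^2 = ε := by linarith
  have hbε : (b^2 - 1)^2 = ε := by rw [hb2]; ring_nf; nlinarith
  have hcε : (c^2 - 1)^2 = ε := by rw [hc2]; ring_nf; nlinarith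
  have hmbε : ((-b)^2 - 1)^2 = ε := by rw [neg_pow]; simpa using hbε
  have hmcε : ((-c)^2 - 1)^2 = ε := by rw [neg_pow]; simpa using hcε
  have hS := crit_set ε hε0 hε1
  rw [← ha_def, ← hb_def, ← hc_def] at hS
  -- membership in the critical set
  have hmem : ∀ p : ℝ × ℝ, IsCriticalPt (f11 ε) p ↔
      p = (a,1) ∨ p = (a,-1) ∨ p = (-a,1) ∨ p = (-a,-1) ∨
      p = (0,b) ∨ p = (0,-b) ∨ p = (0,c) ∨ p = (0,-c) := by
    intro p
    have := Set.ext_iff.1 hS p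
    simpa only [Set.mem_setOf_eq, Set.mem_insert_iff, Set.mem_singleton_iff] using this
  refine ⟨?_, ?_, ?_, ?_, ?_, ?_⟩
  · -- nondegeneracy
    intro p hp
    rcases (hmem p).1 hp with h | h | h | h | h | h | h | h <;> subst h <;>
      rw [hess_eq] <;> simp only <;> intro hcon
    · nlinarith
    · nlinarith
    · nlinarith
    · nlinarith
    · nlinarith [mul_pos hb hsε, sq_nonneg (4*b^3 - 4*b)]
    · nlinarith [mul_pos hb hsε, sq_nonneg (4*(-b)^3 - 4*(-b))]
    · nlinarith [mul_pos hc hsε, sq_nonneg (4*c^3 - 4*c)]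
    · nlinarith [mul_pos hc hsε, sq_nonneg (4*(-c)^3 - 4*(-c))]
  · rw [hS]
    exact Set.toFinite _
  · rw [hS]
    rw [Set.ncard_insert_of_notMem (by
        intro hm
        simp only [Set.mem_insert_iff, Set.mem_singleton_iff, Prod.mk.injEq] at hm
        casesm* _ ∨ _, _ ∧ _ <;> linarith),
      Set.ncard_insert_of_notMem (by
        intro hm
        simp only [Set.mem_insert_iff, Set.mem_singleton_iff, Prod.mk.injEq] at hm
        casesm* _ ∨ _, _ ∧ _ <;> linarith),
      Set.ncard_insert_of_notMem (by
        intro hm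
        simp only [Set.mem_insert_iff, Set.mem_singleton_iff, Prod.mk.injEq] at hm
        casesm* _ ∨ _, _ ∧ _ <;> linarith),
      Set.ncard_insert_of_notMem (by
        intro hm
        simp only [Set.mem_insert_iff, Set.mem_singleton_iff, Prod.mk.injEq] at hm
        casesm* _ ∨ _, _ ∧ _ <;> linarith),
      Set.ncard_insert_of_notMem (by
        intro hm
        simp only [Set.mem_insert_iff, Set.mem_singleton_iff, Prod.mk.injEq] at hm
        casesm* _ ∨ _, _ ∧ _ <;> linarith),
      Set.ncard_insert_of_notMem (by
        intro hm
        simp only [Set.mem_insert_iff, Set.mem_singleton_iff, Prod.mk.injEq] at hm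
        casesm* _ ∨ _, _ ∧ _ <;> linarith),
      Set.ncard_pair (by
        intro hm
        simp only [Prod.mk.injEq] at hm
        casesm* _ ∧ _ <;> linarith)]
  · -- minima
    have : {p : ℝ × ℝ | IsCriticalPt (f11 ε) p ∧ IsLocMin (f11 ε) p} = {(a,1), (a,-1)} := by
      ext p
      simp only [Set.mem_setOf_eq, Set.mem_insert_iff, Set.mem_singleton_iff]
      constructor
      · rintro ⟨hcrit, hmin⟩
        rcases (hmem p).1 hcrit with h | h | h | h | h | h | h | h <;> subst h
        · exact Or.inl rfl
        · exact Or.inr rfl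
        · exact absurd hmin (notmin_ma ε a 1 ha haε (by norm_num))
        · exact absurd hmin (notmin_ma ε a (-1) ha haε (by norm_num))
        · exact absurd hmin (notmin_0 ε b hbε)
        · exact absurd hmin (notmin_0 ε (-b) hmbε)
        · exact absurd hmin (notmin_0 ε c hcε)
        · exact absurd hmin (notmin_0 ε (-c) hmcε)
      · rintro (h | h) <;> subst h
        · exact ⟨(hmem _).2 (by tauto), locmin ε a 1 ha haε (by norm_num)⟩
        · exact ⟨(hmem _).2 (by tauto), locmin ε a (-1) ha haε (by norm_num)⟩
    rw [this, Set.ncard_pair (by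
      intro hm
      simp only [Prod.mk.injEq] at hm
      casesm* _ ∧ _ <;> linarith)]
  · -- saddles
    have : {p : ℝ × ℝ | IsSaddle (f11 ε) p} = {(0,b), (0,-b), (0,c), (0,-c)} := by
      ext p
      simp only [Set.mem_setOf_eq, Set.mem_insert_iff, Set.mem_singleton_iff, IsSaddle]
      constructor
      · rintro ⟨hcrit, hmin, hmax⟩
        rcases (hmem p).1 hcrit with h | h | h | h | h | h | h | h <;> subst h
        · exact absurd (locmin ε a 1 ha haε (by norm_num)) hmin
        · exact absurd (locmin ε a (-1) ha haε (by norm_num)) hmin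
        · exact absurd (locmax ε a 1 ha haε (by norm_num)) hmax
        · exact absurd (locmax ε a (-1) ha haε (by norm_num)) hmax
        · exact Or.inl rfl
        · exact Or.inr (Or.inl rfl)
        · exact Or.inr (Or.inr (Or.inl rfl))
        · exact Or.inr (Or.inr (Or.inr rfl))
      · rintro (h | h | h | h) <;> subst h
        · exact ⟨(hmem _).2 (by tauto), notmin_0 ε b hbε, notmax_0 ε b hbε⟩
        · exact ⟨(hmem _).2 (by tauto), notmin_0 ε (-b) hmbε, notmax_0 ε (-b) hmbε⟩
        · exact ⟨(hmem _).2 (by tauto), notmin_0 ε c hcε, notmax_0 ε c hcε⟩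
        · exact ⟨(hmem _).2 (by tauto), notmin_0 ε (-c) hmcε, notmax_0 ε (-c) hmcε⟩
    rw [this,
      Set.ncard_insert_of_notMem (by
        intro hm
        simp only [Set.mem_insert_iff, Set.mem_singleton_iff, Prod.mk.injEq] at hm
        casesm* _ ∨ _, _ ∧ _ <;> linarith),
      Set.ncard_insert_of_notMem (by
        intro hm
        simp only [Set.mem_insert_iff, Set.mem_singleton_iff, Prod.mk.injEq] at hm
        casesm* _ ∨ _, _ ∧ _ <;> linarith),
      Set.ncard_pair (by
        intro hm
        simp only [Prod.mk.injEq] at hm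
        casesm* _ ∧ _ <;> linarith)]
  · -- maxima
    have : {p : ℝ × ℝ | IsCriticalPt (f11 ε) p ∧ IsLocMax (f11 ε) p} = {(-a,1), (-a,-1)} := by
      ext p
      simp only [Set.mem_setOf_eq, Set.mem_insert_iff, Set.mem_singleton_iff]
      constructor
      · rintro ⟨hcrit, hmax⟩
        rcases (hmem p).1 hcrit with h | h | h | h | h | h | h | h <;> subst h
        · exact absurd hmax (notmax_a ε a 1 ha haε (by norm_num))
        · exact absurd hmax (notmax_a ε a (-1) ha haε (by norm_num))
        · exact Or.inl rfl
        · exact Or.inr rfl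
        · exact absurd hmax (notmax_0 ε b hbε)
        · exact absurd hmax (notmax_0 ε (-b) hmbε)
        · exact absurd hmax (notmax_0 ε c hcε)
        · exact absurd hmax (notmax_0 ε (-c) hmcε)
      · rintro (h | h) <;> subst h
        · exact ⟨(hmem _).2 (by tauto), locmax ε a 1 ha haε (by norm_num)⟩
        · exact ⟨(hmem _).2 (by tauto), locmax ε a (-1) ha haε (by norm_num)⟩
    rw [this, Set.ncard_pair (by
      intro hm
      simp only [Prod.mk.injEq] at hm
      casesm* _ ∧ _ <;> linarith)]
end

section
/- For every real number ε > 0, the polynomial function f : ℝ² → ℝ given by f(x,y) = x·(x² + y⁴ + ε·y² − ε³) has only nondegenerate critical points, and it has exactly four critical points, of which exactly one is a local minimum, exactly two are saddles, and exactly one is a local maximum. -/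
open Filter Topology


/-- Realizing family for `J₁₀¹` with four critical points and one maximum. -/
noncomputable def f16 (ε : ℝ) : ℝ → ℝ → ℝ := fun x y =>
  x * (x ^ 2 + y ^ 4 + ε * y ^ 2 - ε ^ 3)

/-! ### Derivative computations -/

lemma hasDerivAt_fst (ε y x : ℝ) :
    HasDerivAt (fun t => f16 ε t y) (3 * x ^ 2 + (y ^ 4 + ε * y ^ 2 - ε ^ 3)) x := by
  have h : HasDerivAt (fun t : ℝ => t ^ 3 + (y ^ 4 + ε * y ^ 2 - ε ^ 3) * t)
      (3 * x ^ 2 + (y ^ 4 + ε * y ^ 2 - ε ^ 3)) x := by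
    have h1 : HasDerivAt (fun t : ℝ => t ^ 3) (3 * x ^ 2) x := by
      simpa using hasDerivAt_pow 3 x
    have h2 : HasDerivAt (fun t : ℝ => (y ^ 4 + ε * y ^ 2 - ε ^ 3) * t)
        (y ^ 4 + ε * y ^ 2 - ε ^ 3) x := by
      simpa using (hasDerivAt_id x).const_mul (y ^ 4 + ε * y ^ 2 - ε ^ 3)
    exact h1.add h2
  convert h using 1
  funext t; simp only [f16]; ring

lemma hasDerivAt_snd (ε x y : ℝ) :
    HasDerivAt (fun t => f16 ε x t) (x * (4 * y ^ 3 + 2 * ε * y)) y := by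
  have h1 : HasDerivAt (fun t : ℝ => t ^ 4) (4 * y ^ 3) y := by
    simpa using hasDerivAt_pow 4 y
  have h2 : HasDerivAt (fun t : ℝ => ε * t ^ 2) (ε * (2 * y)) y := by
    simpa using (hasDerivAt_pow 2 y).const_mul ε
  have h : HasDerivAt (fun t : ℝ => t ^ 4 + ε * t ^ 2) (4 * y ^ 3 + ε * (2 * y)) y :=
    h1.add h2
  have h' := (h.add_const (x ^ 2 - ε ^ 3)).const_mul x
  have e : (fun t => f16 ε x t) = fun y => x * (y ^ 4 + ε * y ^ 2 + (x ^ 2 - ε ^ 3)) := by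
    funext t; simp only [f16]; ring
  rw [show x * (4 * y ^ 3 + 2 * ε * y) = x * (4 * y ^ 3 + ε * (2 * y)) by ring, e]; exact h'

lemma deriv_fst (ε y x : ℝ) :
    deriv (fun t => f16 ε t y) x = 3 * x ^ 2 + (y ^ 4 + ε * y ^ 2 - ε ^ 3) :=
  (hasDerivAt_fst ε y x).deriv

lemma deriv_snd (ε x y : ℝ) :
    deriv (fun t => f16 ε x t) y = x * (4 * y ^ 3 + 2 * ε * y) :=
  (hasDerivAt_snd ε x y).deriv

lemma crit_iff (ε : ℝ) (p : ℝ × ℝ) :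
    IsCriticalPt (f16 ε) p ↔
      3 * p.1 ^ 2 + (p.2 ^ 4 + ε * p.2 ^ 2 - ε ^ 3) = 0 ∧
        p.1 * (4 * p.2 ^ 3 + 2 * ε * p.2) = 0 := by
  unfold IsCriticalPt
  rw [deriv_fst, deriv_snd]

lemma hessDet_eq (ε : ℝ) (p : ℝ × ℝ) :
    hessDet (f16 ε) p =
      6 * p.1 * (p.1 * (12 * p.2 ^ 2 + 2 * ε)) - (4 * p.2 ^ 3 + 2 * ε * p.2) ^ 2 := by
  unfold hessDet
  have e1 : (fun x => deriv (fun t => f16 ε t p.2) x)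
      = fun x => 3 * x ^ 2 + (p.2 ^ 4 + ε * p.2 ^ 2 - ε ^ 3) := funext fun x => deriv_fst ε p.2 x
  have e2 : (fun y => deriv (fun t => f16 ε p.1 t) y)
      = fun y => p.1 * (4 * y ^ 3 + 2 * ε * y) := funext fun y => deriv_snd ε p.1 y
  have e3 : (fun y => deriv (fun t => f16 ε t y) p.1)
      = fun y => 3 * p.1 ^ 2 + (y ^ 4 + ε * y ^ 2 - ε ^ 3) := funext fun y => deriv_fst ε y p.1
  rw [e1, e2, e3]
  have d1 : deriv (fun x : ℝ => 3 * x ^ 2 + (p.2 ^ 4 + ε * p.2 ^ 2 - ε ^ 3)) p.1 = 6 * p.1 := by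
    have : HasDerivAt (fun x : ℝ => 3 * x ^ 2 + (p.2 ^ 4 + ε * p.2 ^ 2 - ε ^ 3)) (6 * p.1) p.1 := by
      have := ((hasDerivAt_pow 2 p.1).const_mul 3).add_const (p.2 ^ 4 + ε * p.2 ^ 2 - ε ^ 3)
      exact this.congr_deriv (by norm_num <;> ring)
    exact this.deriv
  have d2 : deriv (fun y : ℝ => p.1 * (4 * y ^ 3 + 2 * ε * y)) p.2
      = p.1 * (12 * p.2 ^ 2 + 2 * ε) := by
    have : HasDerivAt (fun y : ℝ => p.1 * (4 * y ^ 3 + 2 * ε * y))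
        (p.1 * (12 * p.2 ^ 2 + 2 * ε)) p.2 := by
      have h1 : HasDerivAt (fun y : ℝ => 4 * y ^ 3) (12 * p.2 ^ 2) p.2 := by
        have := (hasDerivAt_pow 3 p.2).const_mul 4
        exact this.congr_deriv (by norm_num <;> ring)
      have h2 : HasDerivAt (fun y : ℝ => 2 * ε * y) (2 * ε) p.2 := by
        simpa using (hasDerivAt_id p.2).const_mul (2 * ε)
      exact (h1.add h2).const_mul p.1
    exact this.deriv
  have d3 : deriv (fun y : ℝ => 3 * p.1 ^ 2 + (y ^ 4 + ε * y ^ 2 - ε ^ 3)) p.2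
      = 4 * p.2 ^ 3 + 2 * ε * p.2 := by
    have : HasDerivAt (fun y : ℝ => 3 * p.1 ^ 2 + (y ^ 4 + ε * y ^ 2 - ε ^ 3))
        (4 * p.2 ^ 3 + 2 * ε * p.2) p.2 := by
      have h1 : HasDerivAt (fun y : ℝ => y ^ 4) (4 * p.2 ^ 3) p.2 := by
        simpa using hasDerivAt_pow 4 p.2
      have h2 : HasDerivAt (fun y : ℝ => ε * y ^ 2) (2 * ε * p.2) p.2 := by
        have := (hasDerivAt_pow 2 p.2).const_mul ε
        exact this.congr_deriv (by norm_num <;> ring)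
      exact ((h1.add h2).sub_const (ε ^ 3)).const_add (3 * p.1 ^ 2)
    exact this.deriv
  rw [d1, d2, d3]

/-! ### Helpers for excluding local extrema along curves -/

lemma no_min (f : ℝ → ℝ → ℝ) (p : ℝ × ℝ) (l : Filter ℝ) [l.NeBot] (hl : l ≤ 𝓝 p.1)
    (h : ∀ᶠ x in l, f x p.2 < f p.1 p.2) : ¬ IsLocMin f p := by
  intro hmin
  have hg : Tendsto (fun x : ℝ => ((x, p.2) : ℝ × ℝ)) l (𝓝 p) := by
    have : Tendsto (fun x : ℝ => ((x, p.2) : ℝ × ℝ)) (𝓝 p.1) (𝓝 (p.1, p.2)) :=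
      (Continuous.tendsto (by continuity) p.1)
    exact this.mono_left hl
  have hmin' : IsMinFilter (fun q : ℝ × ℝ => f q.1 q.2) (𝓝 p)
      ((fun x : ℝ => ((x, p.2) : ℝ × ℝ)) p.1) := hmin
  have h2 : ∀ᶠ x in l, f p.1 p.2 ≤ f x p.2 :=
    IsMinFilter.comp_tendsto (g := fun x : ℝ => ((x, p.2) : ℝ × ℝ)) (b := p.1) hmin' hg
  rcases (h.and h2).exists with ⟨x, hx1, hx2⟩
  exact absurd hx2 (not_le.mpr hx1)

lemma no_max (f : ℝ → ℝ → ℝ) (p : ℝ × ℝ) (l : Filter ℝ) [l.NeBot] (hl : l ≤ 𝓝 p.1)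
    (h : ∀ᶠ x in l, f p.1 p.2 < f x p.2) : ¬ IsLocMax f p := by
  intro hmax
  have hg : Tendsto (fun x : ℝ => ((x, p.2) : ℝ × ℝ)) l (𝓝 p) := by
    have : Tendsto (fun x : ℝ => ((x, p.2) : ℝ × ℝ)) (𝓝 p.1) (𝓝 (p.1, p.2)) :=
      (Continuous.tendsto (by continuity) p.1)
    exact this.mono_left hl
  have hmax' : IsMaxFilter (fun q : ℝ × ℝ => f q.1 q.2) (𝓝 p)
      ((fun x : ℝ => ((x, p.2) : ℝ × ℝ)) p.1) := hmax
  have h2 : ∀ᶠ x in l, f x p.2 ≤ f p.1 p.2 :=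
    IsMaxFilter.comp_tendsto (g := fun x : ℝ => ((x, p.2) : ℝ × ℝ)) (b := p.1) hmax'  hg
  rcases (h.and h2).exists with ⟨x, hx1, hx2⟩
  exact absurd hx2 (not_le.mpr hx1)

set_option maxHeartbeats 4000000 in
/-- For every `ε > 0`, the polynomial `x(x² + y⁴ + εy² − ε³)` has only nondegenerate
critical points: exactly four of them, of which exactly one is a local minimum, exactly
two are saddles, and exactly one is a local maximum. -/
theorem morse_data_f16 (ε : ℝ) (hε : 0 < ε) :
    (∀ p : ℝ × ℝ, IsCriticalPt (f16 ε) p → hessDet (f16 ε) p ≠ 0) ∧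
    {p : ℝ × ℝ | IsCriticalPt (f16 ε) p}.Finite ∧
    {p : ℝ × ℝ | IsCriticalPt (f16 ε) p}.ncard = 4 ∧
    {p : ℝ × ℝ | IsCriticalPt (f16 ε) p ∧ IsLocMin (f16 ε) p}.ncard = 1 ∧
    {p : ℝ × ℝ | IsSaddle (f16 ε) p}.ncard = 2 ∧
    {p : ℝ × ℝ | IsCriticalPt (f16 ε) p ∧ IsLocMax (f16 ε) p}.ncard = 1 := by
  -- basic quantities
  obtain ⟨A, hApos, hA2⟩ : ∃ A : ℝ, 0 < A ∧ A ^ 2 = ε ^ 3 / 3 :=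
    ⟨Real.sqrt (ε ^ 3 / 3), Real.sqrt_pos.mpr (by positivity), Real.sq_sqrt (by positivity)⟩
  obtain ⟨B, hBpos, hB4⟩ : ∃ B : ℝ, 0 < B ∧ B ^ 4 + ε * B ^ 2 - ε ^ 3 = 0 := by
    set D : ℝ := ε ^ 2 + 4 * ε ^ 3 with hDdef
    have hDpos : (0:ℝ) < D := by positivity
    have hsqD : Real.sqrt D ^ 2 = D := Real.sq_sqrt hDpos.le
    have hsD_gt : ε < Real.sqrt D := by nlinarith [Real.sqrt_nonneg D, hsqD]
    have hs_pos : 0 < (Real.sqrt D - ε) / 2 := by linarith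
    refine ⟨Real.sqrt ((Real.sqrt D - ε) / 2), Real.sqrt_pos.mpr hs_pos, ?_⟩
    have hB2 : Real.sqrt ((Real.sqrt D - ε) / 2) ^ 2 = (Real.sqrt D - ε) / 2 :=
      Real.sq_sqrt hs_pos.le
    have hB4' : Real.sqrt ((Real.sqrt D - ε) / 2) ^ 4 = ((Real.sqrt D - ε) / 2) ^ 2 := by
      rw [show ∀ x : ℝ, x ^ 4 = (x ^ 2) ^ 2 from fun x => by ring, hB2]
    rw [hB4', hB2]
    nlinarith [hsqD]
  have h3A : ε ^ 3 = 3 * A ^ 2 := by rw [hA2]; ring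
  -- critical points
  have critA : IsCriticalPt (f16 ε) (A, 0) := by
    rw [crit_iff]
    constructor
    · show 3 * A ^ 2 + ((0:ℝ) ^ 4 + ε * 0 ^ 2 - ε ^ 3) = 0; rw [hA2]; ring
    · show A * (4 * (0:ℝ) ^ 3 + 2 * ε * 0) = 0; ring
  have critA' : IsCriticalPt (f16 ε) (-A, 0) := by
    rw [crit_iff]
    constructor
    · show 3 * (-A) ^ 2 + ((0:ℝ) ^ 4 + ε * 0 ^ 2 - ε ^ 3) = 0
      rw [show (-A)^2 = A^2 by ring, hA2]; ring
    · show -A * (4 * (0:ℝ) ^ 3 + 2 * ε * 0) = 0; ring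
  have critB : IsCriticalPt (f16 ε) (0, B) := by
    rw [crit_iff]
    constructor
    · show 3 * (0:ℝ) ^ 2 + (B ^ 4 + ε * B ^ 2 - ε ^ 3) = 0; linarith [hB4]
    · show (0:ℝ) * (4 * B ^ 3 + 2 * ε * B) = 0; ring
  have critB' : IsCriticalPt (f16 ε) (0, -B) := by
    rw [crit_iff]
    constructor
    · show 3 * (0:ℝ) ^ 2 + ((-B) ^ 4 + ε * (-B) ^ 2 - ε ^ 3) = 0
      rw [show (-B)^4 = B^4 by ring, show (-B)^2 = B^2 by ring]; linarith [hB4]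
    · show (0:ℝ) * (4 * (-B) ^ 3 + 2 * ε * (-B)) = 0; ring
  -- the critical set
  have hset : {p : ℝ × ℝ | IsCriticalPt (f16 ε) p}
      = {((A,0) : ℝ × ℝ), (-A,0), (0,B), (0,-B)} := by
    ext ⟨x, y⟩
    simp only [Set.mem_setOf_eq, Set.mem_insert_iff, Set.mem_singleton_iff, Prod.mk.injEq]
    constructor
    · rw [crit_iff]
      rintro ⟨h1, h2⟩
      simp only at h1 h2
      rcases mul_eq_zero.mp h2 with hx0 | hy0
      · -- x = 0, so y⁴+εy²-ε³=0, hence y = ±B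
        subst hx0
        have hy : (y ^ 2 - B ^ 2) * (y ^ 2 + B ^ 2 + ε) = 0 := by nlinarith [hB4]
        have hy2 : y ^ 2 = B ^ 2 := by
          rcases mul_eq_zero.mp hy with h | h
          · linarith
          · nlinarith [sq_nonneg y, sq_nonneg B]
        have : (y - B) * (y + B) = 0 := by nlinarith
        rcases mul_eq_zero.mp this with h | h
        · right; right; left; exact ⟨rfl, by linarith⟩
        · right; right; right; exact ⟨rfl, by linarith⟩
      · -- y = 0
        have hy : y = 0 := by nlinarith [sq_nonneg y]
        subst hy
        have hx2 : x ^ 2 = A ^ 2 := by nlinarith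
        have : (x - A) * (x + A) = 0 := by nlinarith
        rcases mul_eq_zero.mp this with h | h
        · left; exact ⟨by linarith, rfl⟩
        · right; left; exact ⟨by linarith, rfl⟩
    · rintro (⟨rfl, rfl⟩ | ⟨rfl, rfl⟩ | ⟨rfl, rfl⟩ | ⟨rfl, rfl⟩)
      exacts [critA, critA', critB, critB']
  -- distinctness
  have hcard4 : ({((A,0) : ℝ × ℝ), (-A,0), (0,B), (0,-B)} : Set (ℝ × ℝ)).ncard = 4 := by
    rw [Set.ncard_insert_of_notMem, Set.ncard_insert_of_notMem, Set.ncard_pair]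
    · intro h
      rw [Prod.mk.injEq] at h
      exact (by linarith : B ≠ -B) h.2
    · simp only [Set.mem_insert_iff, Set.mem_singleton_iff, Prod.mk.injEq]
      push_neg
      refine ⟨fun h => absurd h (by intro h'; linarith), fun h => absurd h (by intro h'; linarith)⟩
    · simp only [Set.mem_insert_iff, Set.mem_singleton_iff, Prod.mk.injEq]
      push_neg
      exact ⟨fun h => absurd h (by intro h'; linarith),
             fun h => absurd h (by intro h'; linarith),
             fun h => absurd h (by intro h'; linarith)⟩
  -- extremum classification
  have hminA : IsLocMin (f16 ε) (A, 0) := by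
    unfold IsLocMin
    have hopen : {q : ℝ × ℝ | 0 < q.1} ∈ 𝓝 ((A, 0) : ℝ × ℝ) :=
      (isOpen_lt continuous_const continuous_fst).mem_nhds (by simpa using hApos)
    filter_upwards [hopen] with q hq
    have key : f16 ε q.1 q.2 - f16 ε A 0
        = (q.1 - A) ^ 2 * (q.1 + 2 * A) + q.1 * q.2 ^ 2 * (q.2 ^ 2 + ε) := by
      simp only [f16]
      linear_combination (A - q.1) * h3A
    nlinarith [sq_nonneg (q.1 - A), sq_nonneg q.2, mul_pos hq (by positivity : (0:ℝ) < q.2 ^ 2 + ε)]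
  have hmaxA' : IsLocMax (f16 ε) (-A, 0) := by
    unfold IsLocMax
    have hopen : {q : ℝ × ℝ | q.1 < 0} ∈ 𝓝 ((-A, 0) : ℝ × ℝ) :=
      (isOpen_lt continuous_fst continuous_const).mem_nhds (by simpa using hApos)
    filter_upwards [hopen] with q hq
    have key : f16 ε q.1 q.2 - f16 ε (-A) 0
        = (q.1 + A) ^ 2 * (q.1 - 2 * A) + q.1 * q.2 ^ 2 * (q.2 ^ 2 + ε) := by
      simp only [f16]
      linear_combination (-A - q.1) * h3A
    nlinarith [sq_nonneg (q.1 + A), sq_nonneg q.2,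
      mul_nonneg (sq_nonneg q.2) (by positivity : (0:ℝ) ≤ q.2 ^ 2 + ε)]
  -- (A,0) is not a max, (-A,0) is not a min
  have hnotmaxA : ¬ IsLocMax (f16 ε) (A, 0) := by
    apply no_max (f16 ε) (A, 0) (𝓝[≠] A) nhdsWithin_le_nhds
    have h1 : ∀ᶠ x in 𝓝[≠] A, -2 * A < x :=
      eventually_nhdsWithin_of_eventually_nhds (eventually_gt_nhds (by linarith))
    filter_upwards [h1, self_mem_nhdsWithin] with x hx hx'
    have hxne : x ≠ A := hx'
    have key : f16 ε x 0 - f16 ε A 0 = (x - A) ^ 2 * (x + 2 * A) := by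
      simp only [f16]
      linear_combination (A - x) * h3A
    have hne : x - A ≠ 0 := sub_ne_zero.mpr hxne
    have h2 : (0:ℝ) < (x - A) ^ 2 := by
      rcases hne.lt_or_gt with h | h
      · nlinarith
      · nlinarith
    nlinarith
  have hnotminA' : ¬ IsLocMin (f16 ε) (-A, 0) := by
    apply no_min (f16 ε) (-A, 0) (𝓝[≠] (-A)) nhdsWithin_le_nhds
    have h1 : ∀ᶠ x in 𝓝[≠] (-A), x < 2 * A :=
      eventually_nhdsWithin_of_eventually_nhds (eventually_lt_nhds (by linarith))
    filter_upwards [h1, self_mem_nhdsWithin] with x hx hx'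
    have hxne : x ≠ -A := hx'
    have key : f16 ε x 0 - f16 ε (-A) 0 = (x + A) ^ 2 * (x - 2 * A) := by
      simp only [f16]
      linear_combination (-A - x) * h3A
    have hne : x + A ≠ 0 := fun h => hxne (by linarith)
    have h2 : (0:ℝ) < (x + A) ^ 2 := by
      rcases hne.lt_or_gt with h | h
      · nlinarith
      · nlinarith
    nlinarith
  -- saddle behavior at (0, ±B)
  have cube : ∀ y : ℝ, y ^ 4 + ε * y ^ 2 - ε ^ 3 = 0 → ∀ x : ℝ, f16 ε x y = x ^ 3 := by
    intro y hy x
    simp only [f16]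
    linear_combination x * hy
  have hB4' : (-B) ^ 4 + ε * (-B) ^ 2 - ε ^ 3 = 0 := by
    rw [show (-B)^4 = B^4 by ring, show (-B)^2 = B^2 by ring]; exact hB4
  have saddle_aux : ∀ y : ℝ, y ^ 4 + ε * y ^ 2 - ε ^ 3 = 0 →
      ¬ IsLocMin (f16 ε) (0, y) ∧ ¬ IsLocMax (f16 ε) (0, y) := by
    intro y hy
    constructor
    · apply no_min (f16 ε) (0, y) (𝓝[<] 0) nhdsWithin_le_nhds
      filter_upwards [self_mem_nhdsWithin] with x hx
      simp only [Set.mem_Iio] at hx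
      rw [cube y hy x, cube y hy 0]
      have h2 : 0 < x * x := mul_pos_of_neg_of_neg hx hx
      nlinarith
    · apply no_max (f16 ε) (0, y) (𝓝[>] 0) nhdsWithin_le_nhds
      filter_upwards [self_mem_nhdsWithin] with x hx
      simp only [Set.mem_Ioi] at hx
      rw [cube y hy x, cube y hy 0]
      have h2 : 0 < x * x := mul_pos hx hx
      nlinarith
  have hsadB := saddle_aux B hB4
  have hsadB' := saddle_aux (-B) hB4'
  -- nondegeneracy
  have hnondeg : ∀ p : ℝ × ℝ, IsCriticalPt (f16 ε) p → hessDet (f16 ε) p ≠ 0 := by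
    intro p hp
    have hmem : p ∈ ({((A,0) : ℝ × ℝ), (-A,0), (0,B), (0,-B)} : Set (ℝ × ℝ)) := by
      rw [← hset]; exact hp
    simp only [Set.mem_insert_iff, Set.mem_singleton_iff] at hmem
    rcases hmem with rfl | rfl | rfl | rfl <;> rw [hessDet_eq]
    · show 6 * A * (A * (12 * (0:ℝ) ^ 2 + 2 * ε)) - (4 * (0:ℝ) ^ 3 + 2 * ε * 0) ^ 2 ≠ 0
      have : 6 * A * (A * (12 * (0:ℝ) ^ 2 + 2 * ε)) - (4 * (0:ℝ) ^ 3 + 2 * ε * 0) ^ 2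
          = 12 * ε * A ^ 2 := by ring
      rw [this, hA2]; positivity
    · show 6 * -A * (-A * (12 * (0:ℝ) ^ 2 + 2 * ε)) - (4 * (0:ℝ) ^ 3 + 2 * ε * 0) ^ 2 ≠ 0
      have : 6 * -A * (-A * (12 * (0:ℝ) ^ 2 + 2 * ε)) - (4 * (0:ℝ) ^ 3 + 2 * ε * 0) ^ 2
          = 12 * ε * A ^ 2 := by ring
      rw [this, hA2]; positivity
    · show 6 * (0:ℝ) * (0 * (12 * B ^ 2 + 2 * ε)) - (4 * B ^ 3 + 2 * ε * B) ^ 2 ≠ 0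
      have h1 : (0:ℝ) < 4 * B ^ 3 + 2 * ε * B := by positivity
      nlinarith
    · show 6 * (0:ℝ) * (0 * (12 * (-B) ^ 2 + 2 * ε)) - (4 * (-B) ^ 3 + 2 * ε * (-B)) ^ 2 ≠ 0
      have h1 : (0:ℝ) < 4 * B ^ 3 + 2 * ε * B := by positivity
      have h2 : (4 * (-B) ^ 3 + 2 * ε * (-B)) = -(4 * B ^ 3 + 2 * ε * B) := by ring
      rw [h2]; nlinarith
  -- min set
  have hminset : {p : ℝ × ℝ | IsCriticalPt (f16 ε) p ∧ IsLocMin (f16 ε) p} = {((A,0) : ℝ × ℝ)} := by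
    ext p
    simp only [Set.mem_setOf_eq, Set.mem_singleton_iff]
    constructor
    · rintro ⟨hc, hm⟩
      have hmem : p ∈ ({((A,0) : ℝ × ℝ), (-A,0), (0,B), (0,-B)} : Set (ℝ × ℝ)) := by
        rw [← hset]; exact hc
      simp only [Set.mem_insert_iff, Set.mem_singleton_iff] at hmem
      rcases hmem with rfl | rfl | rfl | rfl
      · rfl
      · exact absurd hm hnotminA'
      · exact absurd hm hsadB.1
      · exact absurd hm hsadB'.1
    · rintro rfl; exact ⟨critA, hminA⟩
  -- max set
  have hmaxset : {p : ℝ × ℝ | IsCriticalPt (f16 ε) p ∧ IsLocMax (f16 ε) p} = {((-A,0) : ℝ × ℝ)} := by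
    ext p
    simp only [Set.mem_setOf_eq, Set.mem_singleton_iff]
    constructor
    · rintro ⟨hc, hm⟩
      have hmem : p ∈ ({((A,0) : ℝ × ℝ), (-A,0), (0,B), (0,-B)} : Set (ℝ × ℝ)) := by
        rw [← hset]; exact hc
      simp only [Set.mem_insert_iff, Set.mem_singleton_iff] at hmem
      rcases hmem with rfl | rfl | rfl | rfl
      · exact absurd hm hnotmaxA
      · rfl
      · exact absurd hm hsadB.2
      · exact absurd hm hsadB'.2
    · rintro rfl; exact ⟨critA', hmaxA'⟩
  -- saddle set
  have hsadset : {p : ℝ × ℝ | IsSaddle (f16 ε) p} = {((0,B) : ℝ × ℝ), (0,-B)} := by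
    ext p
    simp only [Set.mem_setOf_eq, Set.mem_insert_iff, Set.mem_singleton_iff, IsSaddle]
    constructor
    · rintro ⟨hc, hm, hM⟩
      have hmem : p ∈ ({((A,0) : ℝ × ℝ), (-A,0), (0,B), (0,-B)} : Set (ℝ × ℝ)) := by
        rw [← hset]; exact hc
      simp only [Set.mem_insert_iff, Set.mem_singleton_iff] at hmem
      rcases hmem with rfl | rfl | rfl | rfl
      · exact absurd hminA hm
      · exact absurd hmaxA' hM
      · left; rfl
      · right; rfl
    · rintro (rfl | rfl)
      · exact ⟨critB, hsadB.1, hsadB.2⟩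
      · exact ⟨critB', hsadB'.1, hsadB'.2⟩
  refine ⟨hnondeg, ?_, ?_, ?_, ?_, ?_⟩
  · rw [hset]; exact Set.toFinite _
  · rw [hset]; exact hcard4
  · rw [hminset]; exact Set.ncard_singleton _
  · rw [hsadset]
    exact Set.ncard_pair (by intro h; rw [Prod.mk.injEq] at h; linarith [h.2])
  · rw [hmaxset]; exact Set.ncard_singleton _
end
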